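/- Let M̂ be SPD of size n̂, B̂ of size k×n̂, Ŵ SPD of size k, and C of size m×n̂ of full row rank. Set Â = B̂ᵀ Ŵ⁻¹ B̂ + M̂. Then C Â⁻¹ Cᵀ = [C, 0] [M̂, B̂ᵀ; B̂, −Ŵ]⁻¹ [Cᵀ; 0], i.e., the hybridization Schur complement of the second-order form equals that of the mixed form. -/

import Mathlib

/-!
Eliminating the lower-right block `-Ŵ` shows that the upper-left block of the inverse of the
mixed matrix is the inverse of its Schur complement `M̂ - B̂ᵀ (-Ŵ)⁻¹ B̂ = Â`, which is invertible
because `Â` is positive definite; compressing by `[C, 0]` reads off exactly that block.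
-/

open Matrix

namespace Matrix

variable {l m n o R : Type*} [Fintype m] [Fintype n]

theorem inv_neg [DecidableEq n] [CommRing R] (A : Matrix n n R) :
    (-A)⁻¹ = -A⁻¹ := by
  by_cases h : IsUnit A.det
  · exact inv_eq_left_inv (by rw [neg_mul_neg, nonsing_inv_mul A h])
  · have h' : ¬IsUnit (-A).det := by
      rwa [det_neg, IsUnit.mul_iff, and_iff_right (isUnit_neg_one.pow _)]
    rw [nonsing_inv_apply_not_isUnit A h, nonsing_inv_apply_not_isUnit _ h', neg_zero]

theorem fromCols_zero_mul_mul_transpose_fromCols_zero [CommSemiring R]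
    (X : Matrix l m R) (Y : Matrix o m R) (K : Matrix (m ⊕ n) (m ⊕ n) R) :
    fromCols X (0 : Matrix l n R) * K * (fromCols Y (0 : Matrix o n R))ᵀ =
      X * K.toBlocks₁₁ * Yᵀ := by
  rw [← fromBlocks_toBlocks K, transpose_fromCols, fromCols_mul_fromBlocks,
    fromCols_mul_fromRows, toBlocks_fromBlocks₁₁]
  simp

theorem toBlocks₁₁_inv_fromBlocks [DecidableEq m] [DecidableEq n] [CommRing R]
    (A : Matrix m m R) (B : Matrix m n R) (C : Matrix n m R) (D : Matrix n n R)
    (hD : IsUnit D) (hS : IsUnit (A - B * D⁻¹ * C)) :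
    (fromBlocks A B C D)⁻¹.toBlocks₁₁ = (A - B * D⁻¹ * C)⁻¹ := by
  obtain ⟨_⟩ := hD.nonempty_invertible
  rw [← invOf_eq_nonsing_inv D] at hS ⊢
  obtain ⟨_⟩ := hS.nonempty_invertible
  let := fromBlocks₂₂Invertible A B C D
  rw [← invOf_eq_nonsing_inv, invOf_fromBlocks₂₂_eq, toBlocks_fromBlocks₁₁, invOf_eq_nonsing_inv]

theorem PosDef.conjTranspose_mul_inv_mul_add {K : Type*} [Field K] [PartialOrder K] [StarRing K]
    [AddLeftMono K] [DecidableEq n] {M : Matrix m m K} {W : Matrix n n K} (B : Matrix n m K)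
    (hW : W.PosDef) (hM : M.PosDef) : (Bᴴ * W⁻¹ * B + M).PosDef :=
  PosDef.posSemidef_add (hW.inv.posSemidef.conjTranspose_mul_mul_same B) hM

end Matrix

theorem hybridization_schur_second_order_eq_mixed_general
    (nh k m : ℕ)
    (M : Matrix (Fin nh) (Fin nh) ℝ) (B : Matrix (Fin k) (Fin nh) ℝ)
    (W : Matrix (Fin k) (Fin k) ℝ) (C : Matrix (Fin m) (Fin nh) ℝ)
    (hM : M.PosDef) (hW : W.PosDef)
    (A : Matrix (Fin nh) (Fin nh) ℝ)
    (hA : A = Bᵀ * W⁻¹ * B + M) :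
    C * A⁻¹ * Cᵀ =
      (Matrix.fromCols C (0 : Matrix (Fin m) (Fin k) ℝ)) * (Matrix.fromBlocks M Bᵀ B (-W))⁻¹ *
        (Matrix.fromCols C (0 : Matrix (Fin m) (Fin k) ℝ))ᵀ := by
  have hSchur : M - Bᵀ * (-W)⁻¹ * B = A := by
    rw [hA, Matrix.inv_neg, Matrix.mul_neg, Matrix.neg_mul, sub_neg_eq_add, add_comm]
  have hApd : A.PosDef := by
    simpa only [hA, conjTranspose_eq_transpose_of_trivial] using
      PosDef.conjTranspose_mul_inv_mul_add B hW hM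
  rw [fromCols_zero_mul_mul_transpose_fromCols_zero,
    toBlocks₁₁_inv_fromBlocks _ _ _ _ hW.isUnit.neg (hSchur ▸ hApd.isUnit), hSchur]

theorem hybridization_schur_second_order_eq_mixed
    (nh k m : ℕ)
    (M : Matrix (Fin nh) (Fin nh) ℝ) (B : Matrix (Fin k) (Fin nh) ℝ)
    (W : Matrix (Fin k) (Fin k) ℝ) (C : Matrix (Fin m) (Fin nh) ℝ)
    (hM : M.PosDef) (hW : W.PosDef)
    (hC : LinearMap.range C.mulVecLin = ⊤)
    (A : Matrix (Fin nh) (Fin nh) ℝ)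
    (hA : A = Bᵀ * W⁻¹ * B + M) :
    C * A⁻¹ * Cᵀ =
      (Matrix.fromCols C (0 : Matrix (Fin m) (Fin k) ℝ)) * (Matrix.fromBlocks M Bᵀ B (-W))⁻¹ *
        (Matrix.fromCols C (0 : Matrix (Fin m) (Fin k) ℝ))ᵀ :=
  hybridization_schur_second_order_eq_mixed_general nh k m M B W C hM hW A hA
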